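/- Let (A₁ →d A₀, μ₂, μ₃, α₀, α₁) be a strict 2-term HA∞-algebra (that is, μ₃ = 0), and set μ_A(m,n) := μ₂(d(m),n) on A₁, φ(b,m) := μ₂(b,m) and φ(m,b) := μ₂(m,b) for b ∈ A₀, m ∈ A₁. Then ((A₁, μ_A, α₁), (A₀, μ₂, α₀), d, φ) is a crossed module of hom-associative algebras: φ defines a hom-bimodule structure on A₁ over (A₀, μ₂, α₀) with respect to α₁, and for all m, n ∈ A₁ and b ∈ A₀ one has d(φ(b,m)) = μ₂(b, d(m)), d(φ(m,b)) = μ₂(d(m), b), φ(d(m), n) = μ_A(m,n), φ(m, d(n)) = μ_A(m,n), φ(α₀(b), μ_A(m,n)) = μ_A(φ(b,m), α₁(n)), and φ(μ_A(m,n), α₀(b)) = μ_A(α₁(m), φ(n,b)). -/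

import Mathlib

/-- A 2-term HA∞-algebra `(A₁ →d A₀, μ₂, μ₃, α₀, α₁)` over a field `k`.
`m00`, `m01`, `m10` are the three components of the bilinear map `μ₂`,
`m3` is the trilinear map `μ₃`, and `a0`, `a1` are the linear maps `α₀`, `α₁`. -/
structure TwoTermHA (k : Type*) [Field k] (A0 A1 : Type*)
    [AddCommGroup A0] [Module k A0] [AddCommGroup A1] [Module k A1] where
  d : A1 →ₗ[k] A0
  m00 : A0 →ₗ[k] A0 →ₗ[k] A0
  m01 : A0 →ₗ[k] A1 →ₗ[k] A1
  m10 : A1 →ₗ[k] A0 →ₗ[k] A1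
  m3 : A0 →ₗ[k] A0 →ₗ[k] A0 →ₗ[k] A1
  a0 : A0 →ₗ[k] A0
  a1 : A1 →ₗ[k] A1
  comm_d : ∀ m, a0 (d m) = d (a1 m)
  comm_m3 : ∀ a b c, a1 (m3 a b c) = m3 (a0 a) (a0 b) (a0 c)
  axb : ∀ a b, a0 (m00 a b) = m00 (a0 a) (a0 b)
  axc : ∀ a m, a1 (m01 a m) = m01 (a0 a) (a1 m)
  axd : ∀ m a, a1 (m10 m a) = m10 (a1 m) (a0 a)
  axe : ∀ a m, d (m01 a m) = m00 a (d m)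
  axf : ∀ m a, d (m10 m a) = m00 (d m) a
  axg : ∀ m n, m01 (d m) n = m10 m (d n)
  axh : ∀ a b c, d (m3 a b c) = m00 (m00 a b) (a0 c) - m00 (a0 a) (m00 b c)
  axi1 : ∀ a b m, m3 a b (d m) = m01 (m00 a b) (a1 m) - m01 (a0 a) (m01 b m)
  axi2 : ∀ a m c, m3 a (d m) c = m10 (m01 a m) (a0 c) - m01 (a0 a) (m10 m c)
  axi3 : ∀ m b c, m3 (d m) b c = m10 (m10 m b) (a0 c) - m10 (a1 m) (m00 b c)
  axj : ∀ a b c e,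
    m3 (m00 a b) (a0 c) (a0 e) - m3 (a0 a) (m00 b c) (a0 e)
        + m3 (a0 a) (a0 b) (m00 c e)
      = m10 (m3 a b c) (a0 (a0 e)) + m01 (a0 (a0 a)) (m3 b c e)

/-!
With `μ₃ = 0`, axioms (h), (i1), (i2), (i3) say exactly that `μ₂` is hom-associative in each of
its four placements of `A₀`- and `A₁`-arguments. The hom-associativity of `μ_A` and the last two
crossed-module identities are instances of these with one argument in the image of `d`, rewritten
with `α₀ ∘ d = d ∘ α₁` and (e); all remaining conditions are axioms of a 2-term HA∞-algebra.
-/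

namespace TwoTermHA

variable {k A0 A1 : Type*} [Field k] [AddCommGroup A0] [Module k A0] [AddCommGroup A1]
  [Module k A1] (T : TwoTermHA k A0 A1)

theorem m00_hom_assoc (h : T.m3 = 0) (a b c : A0) :
    T.m00 (T.a0 a) (T.m00 b c) = T.m00 (T.m00 a b) (T.a0 c) := by
  rw [eq_comm, ← sub_eq_zero, ← T.axh, h]
  exact map_zero T.d

theorem m01_m01_hom_assoc (h : T.m3 = 0) (a b : A0) (m : A1) :
    T.m01 (T.a0 a) (T.m01 b m) = T.m01 (T.m00 a b) (T.a1 m) := by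
  rw [eq_comm, ← sub_eq_zero, ← T.axi1, h]
  rfl

theorem m10_m00_hom_assoc (h : T.m3 = 0) (a b : A0) (m : A1) :
    T.m10 (T.a1 m) (T.m00 a b) = T.m10 (T.m10 m a) (T.a0 b) := by
  rw [eq_comm, ← sub_eq_zero, ← T.axi3, h]
  rfl

theorem m01_m10_hom_assoc (h : T.m3 = 0) (a b : A0) (m : A1) :
    T.m01 (T.a0 a) (T.m10 m b) = T.m10 (T.m01 a m) (T.a0 b) := by
  rw [eq_comm, ← sub_eq_zero, ← T.axi2, h]
  rfl

end TwoTermHA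

theorem strict_gives_crossed_module
    {k A0 A1 : Type*} [Field k]
    [AddCommGroup A0] [Module k A0] [AddCommGroup A1] [Module k A1]
    (T : TwoTermHA k A0 A1) (hstrict : T.m3 = 0) :
    -- (A₁, μ_A, α₁) is a hom-associative algebra
    (∀ m n, T.a1 (T.m01 (T.d m) n) = T.m01 (T.d (T.a1 m)) (T.a1 n))
      ∧ (∀ m n p, T.m01 (T.d (T.a1 m)) (T.m01 (T.d n) p)
          = T.m01 (T.d (T.m01 (T.d m) n)) (T.a1 p))
      -- (A₀, μ₂, α₀) is a hom-associative algebra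
      ∧ (∀ a b, T.a0 (T.m00 a b) = T.m00 (T.a0 a) (T.a0 b))
      ∧ (∀ a b c, T.m00 (T.a0 a) (T.m00 b c) = T.m00 (T.m00 a b) (T.a0 c))
      -- d is a morphism of hom-associative algebras
      ∧ (∀ m, T.d (T.a1 m) = T.a0 (T.d m))
      ∧ (∀ m n, T.d (T.m01 (T.d m) n) = T.m00 (T.d m) (T.d n))
      -- φ defines a hom-bimodule structure on A₁ over (A₀, μ₂, α₀) with respect to α₁
      ∧ (∀ b m, T.a1 (T.m01 b m) = T.m01 (T.a0 b) (T.a1 m))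
      ∧ (∀ m b, T.a1 (T.m10 m b) = T.m10 (T.a1 m) (T.a0 b))
      ∧ (∀ a b m, T.m01 (T.a0 a) (T.m01 b m) = T.m01 (T.m00 a b) (T.a1 m))
      ∧ (∀ a b m, T.m10 (T.a1 m) (T.m00 a b) = T.m10 (T.m10 m a) (T.a0 b))
      ∧ (∀ a b m, T.m01 (T.a0 a) (T.m10 m b) = T.m10 (T.m01 a m) (T.a0 b))
      -- the six crossed-module identities
      ∧ (∀ b m, T.d (T.m01 b m) = T.m00 b (T.d m))
      ∧ (∀ m b, T.d (T.m10 m b) = T.m00 (T.d m) b)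
      ∧ (∀ m n, T.m01 (T.d m) n = T.m01 (T.d m) n)
      ∧ (∀ m n, T.m10 m (T.d n) = T.m01 (T.d m) n)
      ∧ (∀ b m n, T.m01 (T.a0 b) (T.m01 (T.d m) n) = T.m01 (T.d (T.m01 b m)) (T.a1 n))
      ∧ (∀ b m n, T.m10 (T.m01 (T.d m) n) (T.a0 b) = T.m01 (T.d (T.a1 m)) (T.m10 n b)) := by
  refine ⟨fun m n => by rw [T.axc, T.comm_d], fun m n p => ?_, T.axb, T.m00_hom_assoc hstrict,
    fun m => (T.comm_d m).symm, fun m n => T.axe (T.d m) n, T.axc, T.axd,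
    T.m01_m01_hom_assoc hstrict, T.m10_m00_hom_assoc hstrict, T.m01_m10_hom_assoc hstrict,
    T.axe, T.axf, fun m n => rfl, fun m n => (T.axg m n).symm, fun b m n => ?_, fun b m n => ?_⟩
  · rw [← T.comm_d, T.m01_m01_hom_assoc hstrict, T.axe]
  · rw [T.m01_m01_hom_assoc hstrict, T.axe]
  · rw [← T.m01_m10_hom_assoc hstrict, T.comm_d]
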